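/- arXiv:1806.03567 — 4 statements merged into one kernel-verified Lean document; each statement's English description precedes it below -/
import Mathlib

section
/- Let N ≥ 1 and let e₁, e₂ denote the standard basis of ℂ². The tensor T = Σ_{i : {1,…,N} → {1,2}} (e_{i(1)} ⊗ ⋯ ⊗ e_{i(N)}) ⊗ (e_{i(1)} ⊗ ⋯ ⊗ e_{i(N)}), viewed as an element of the 2N-fold tensor product (ℂ²)^{⊗2N}, has tensor rank exactly 2^N: it is a sum of 2^N rank-one tensors, and it cannot be written as a sum of fewer than 2^N rank-one tensors. -/
open scoped BigOperators

/-- `cpRankLE t r` says the tensor `t ∈ (ℂ²)^{⊗m}` (written in coordinates with respect to the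
standard basis) can be written as a sum of `r` rank-one (pure) tensors. -/
def cpRankLE {m : ℕ} (t : (Fin m → Fin 2) → ℂ) (r : ℕ) : Prop :=
  ∃ w : Fin r → Fin m → Fin 2 → ℂ, t = fun x => ∑ j : Fin r, ∏ v : Fin m, w j v (x v)

/-- The tensor `T = Σ_{i : Fin N → Fin 2} e_{i(1)} ⊗ ⋯ ⊗ e_{i(N)} ⊗ e_{i(1)} ⊗ ⋯ ⊗ e_{i(N)}`
viewed as an element of the `2N`-fold tensor product `(ℂ²)^{⊗2N}`, in coordinates: the `t`-th
factor (for `t < N`) and the `(N+t)`-th factor both carry `e_{i(t)}`. -/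
noncomputable def T1 (N : ℕ) : (Fin (2 * N) → Fin 2) → ℂ := fun x =>
  ∑ i : Fin N → Fin 2,
    (∏ t : Fin N, if x ⟨t.1, by have := t.2; omega⟩ = i t then (1 : ℂ) else 0) *
    (∏ t : Fin N, if x ⟨N + t.1, by have := t.2; omega⟩ = i t then (1 : ℂ) else 0)

/-- Split a product over `Fin (2*N)` into the first `N` and last `N` factors. -/
lemma prod_split {N : ℕ} (f : Fin (2 * N) → ℂ) :
    ∏ v : Fin (2 * N), f v =
      (∏ t : Fin N, f ⟨t.1, by have := t.2; omega⟩) *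
      (∏ t : Fin N, f ⟨N + t.1, by have := t.2; omega⟩) := by
  have h : ∏ v : Fin (2 * N), f v
      = ∏ i : Fin (N + N), f (Fin.cast (two_mul N).symm i) :=
    Fintype.prod_equiv (finCongr (two_mul N)) f
      (fun i => f (Fin.cast (two_mul N).symm i)) (fun i => rfl)
  rw [h, Fin.prod_univ_add]
  rfl

/-- Concatenate two index vectors. -/
def join {N : ℕ} (a b : Fin N → Fin 2) : Fin (2 * N) → Fin 2 := fun x =>
  if h : x.1 < N then a ⟨x.1, h⟩ else b ⟨x.1 - N, by have := x.2; omega⟩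

lemma join_left {N : ℕ} (a b : Fin N → Fin 2) (t : Fin N) :
    join a b ⟨t.1, by have := t.2; omega⟩ = a t := by
  simp [join, t.2]

lemma join_right {N : ℕ} (a b : Fin N → Fin 2) (t : Fin N) :
    join a b ⟨N + t.1, by have := t.2; omega⟩ = b t := by
  have : ¬ (N + t.1 < N) := by omega
  simp [join, this]

lemma T1_join {N : ℕ} (a b : Fin N → Fin 2) :
    T1 N (join a b) = if a = b then 1 else 0 := by
  unfold T1
  have key : ∀ i : Fin N → Fin 2,
      (∏ t : Fin N, if join a b ⟨t.1, by have := t.2; omega⟩ = i t then (1 : ℂ) else 0) *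
      (∏ t : Fin N, if join a b ⟨N + t.1, by have := t.2; omega⟩ = i t then (1 : ℂ) else 0)
      = (if i = a then 1 else 0) * (if i = b then 1 else 0) := by
    intro i
    congr 1
    · rw [Fintype.prod_boole]
      simp only [join_left]
      congr 1
      simp only [eq_iff_iff, funext_iff]
      constructor
      · intro h t; exact (h t).symm
      · intro h t; exact (h t).symm
    · rw [Fintype.prod_boole]
      simp only [join_right]
      congr 1
      simp only [eq_iff_iff, funext_iff]
      constructor
      · intro h t; exact (h t).symm
      · intro h t; exact (h t).symm
  rw [Finset.sum_congr rfl fun i _ => key i]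
  simp [Finset.sum_ite_eq', eq_comm]

/-- The tensor `T1 N` has tensor rank exactly `2^N`: it is a sum of `2^N` rank-one tensors and
cannot be written as a sum of fewer than `2^N` rank-one tensors. -/
theorem stmt1 (N : ℕ) (hN : 1 ≤ N) :
    cpRankLE (T1 N) (2 ^ N) ∧ ∀ r : ℕ, r < 2 ^ N → ¬ cpRankLE (T1 N) r := by
  classical
  have hcard : Fintype.card (Fin N → Fin 2) = 2 ^ N := by simp
  constructor
  · -- upper bound
    obtain ⟨e⟩ : Nonempty (Fin (2 ^ N) ≃ (Fin N → Fin 2)) :=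
      ⟨(Fintype.equivFinOfCardEq hcard).symm⟩
    refine ⟨fun j v k => if h : v.1 < N then (if k = e j ⟨v.1, h⟩ then 1 else 0)
      else (if k = e j ⟨v.1 - N, by have := v.2; omega⟩ then 1 else 0), ?_⟩
    funext x
    unfold T1
    rw [← Equiv.sum_comp e]
    refine Finset.sum_congr rfl fun j _ => ?_
    rw [prod_split]
    congr 1
    · refine Finset.prod_congr rfl fun t _ => ?_
      simp [t.2]
    · refine Finset.prod_congr rfl fun t _ => ?_
      have h1 : ¬ (N + t.1 < N) := by omega
      simp [h1]
  · -- lower bound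
    rintro r hr ⟨w, hw⟩
    set A : Fin r → (Fin N → Fin 2) → ℂ := fun j a => ∏ t : Fin N,
      w j ⟨t.1, by have := t.2; omega⟩ (a t) with hA
    set B : Fin r → (Fin N → Fin 2) → ℂ := fun j b => ∏ t : Fin N,
      w j ⟨N + t.1, by have := t.2; omega⟩ (b t) with hB
    have hMat : ∀ a b : Fin N → Fin 2,
        (∑ j : Fin r, A j a * B j b) = if a = b then 1 else 0 := by
      intro a b
      rw [← T1_join a b, hw]
      refine Finset.sum_congr rfl fun j _ => ?_
      rw [prod_split]
      congr 1
      · exact Finset.prod_congr rfl fun t _ => by rw [join_left]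
      · exact Finset.prod_congr rfl fun t _ => by rw [join_right]
    have hsingle : ∀ a : Fin N → Fin 2,
        (Pi.single a 1 : (Fin N → Fin 2) → ℂ) = ∑ j : Fin r, A j a • B j := by
      intro a
      funext b
      rw [Finset.sum_apply]
      simp only [Pi.smul_apply, smul_eq_mul]
      rw [hMat a b]
      by_cases h : a = b
      · subst h; simp
      · simp [Pi.single_apply, h, Ne.symm h]
    have hspan : Submodule.span ℂ (Set.range B) = ⊤ := by
      rw [eq_top_iff]
      intro f _
      have : f = ∑ a : Fin N → Fin 2, f a • (Pi.single a 1 : (Fin N → Fin 2) → ℂ) := by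
        funext b
        rw [Finset.sum_apply]
        simp [Pi.single_apply]
      rw [this]
      refine Submodule.sum_mem _ fun a _ => Submodule.smul_mem _ _ ?_
      rw [hsingle a]
      exact Submodule.sum_mem _ fun j _ =>
        Submodule.smul_mem _ _ (Submodule.subset_span ⟨j, rfl⟩)
    have hle : Module.finrank ℂ ((Fin N → Fin 2) → ℂ) ≤ Fintype.card (Fin r) :=
      finrank_le_of_span_eq_top hspan
    rw [Module.finrank_pi, hcard, Fintype.card_fin] at hle
    omega
end

section
/- Let N ≥ 1 and let e₁, e₂ denote the standard basis of ℂ². Let T = Σ_{i : {1,…,N} → {1,2}} (e_{i(1)} ⊗ ⋯ ⊗ e_{i(N)}) ⊗ (e_{i(1)} ⊗ ⋯ ⊗ e_{i(N)}) ∈ (ℂ²)^{⊗2N} (2N tensor factors). Then for every r < 2^N, T does not lie in the closure (in the Euclidean topology of the finite-dimensional complex vector space (ℂ²)^{⊗2N}) of the set of tensors of rank at most r; consequently the border rank of T equals 2^N. -/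
open scoped BigOperators

lemma prodSplit {N : ℕ} (f : Fin (2 * N) → ℂ) :
    ∏ v : Fin (2 * N), f v =
      (∏ t : Fin N, f ⟨t.1, by have := t.2; omega⟩) *
        ∏ t : Fin N, f ⟨N + t.1, by have := t.2; omega⟩ := by
  have h2 : N + N = 2 * N := by ring
  rw [← Equiv.prod_comp (finCongr h2) f, Fin.prod_univ_add]
  congr 1 <;> exact Finset.prod_congr rfl fun t _ => congrArg f (Fin.ext (by simp))

lemma prodInd {N : ℕ} (a i : Fin N → Fin 2) :
    (∏ t : Fin N, (if a t = i t then (1 : ℂ) else 0)) = if a = i then 1 else 0 := by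
  by_cases h : a = i
  · simp [h]
  · obtain ⟨t, ht⟩ := Function.ne_iff.mp h
    rw [if_neg h]
    exact Finset.prod_eq_zero (Finset.mem_univ t) (by simp [ht])

def glue {N : ℕ} (a b : Fin N → Fin 2) : Fin (2 * N) → Fin 2 := fun v =>
  if h : v.1 < N then a ⟨v.1, h⟩ else b ⟨v.1 - N, by have := v.2; omega⟩

noncomputable def Mt {N : ℕ} (t : (Fin (2 * N) → Fin 2) → ℂ) :
    Matrix (Fin N → Fin 2) (Fin N → Fin 2) ℂ :=
  Matrix.of fun a b => t (glue a b)

lemma glue_left {N : ℕ} (a b : Fin N → Fin 2) (t : Fin N) :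
    glue a b ⟨t.1, by have := t.2; omega⟩ = a t := by
  simp only [glue, dif_pos t.2]

lemma glue_right {N : ℕ} (a b : Fin N → Fin 2) (t : Fin N) :
    glue a b ⟨N + t.1, by have := t.2; omega⟩ = b t := by
  have h : ¬ (N + t.1 < N) := by omega
  simp only [glue, dif_neg h]
  congr 1
  ext
  simp

lemma Mt_T1 (N : ℕ) : Mt (T1 N) = 1 := by
  funext a b
  show T1 N (glue a b) = (1 : Matrix (Fin N → Fin 2) (Fin N → Fin 2) ℂ) a b
  rw [T1, Matrix.one_apply]
  have : ∀ i : Fin N → Fin 2,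
      (∏ t : Fin N, if glue a b ⟨t.1, by have := t.2; omega⟩ = i t then (1 : ℂ) else 0) *
        (∏ t : Fin N, if glue a b ⟨N + t.1, by have := t.2; omega⟩ = i t then (1 : ℂ) else 0)
      = (if a = i then 1 else 0) * (if b = i then 1 else 0) := by
    intro i
    rw [← prodInd a i, ← prodInd b i]
    congr 1
    · exact Finset.prod_congr rfl fun t _ => by rw [glue_left]
    · exact Finset.prod_congr rfl fun t _ => by rw [glue_right]
  rw [Finset.sum_congr rfl fun i _ => this i]
  by_cases h : a = b
  · subst h
    simp
  · rw [if_neg h]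
    apply Finset.sum_eq_zero
    intro i _
    by_cases ha : a = i
    · rw [if_neg (show ¬ b = i from fun hb => h (ha.trans hb.symm))]
      ring
    · rw [if_neg ha]; ring

lemma det_zero_of_cpRank {N r : ℕ} (hr : r < 2 ^ N) {t : (Fin (2 * N) → Fin 2) → ℂ}
    (h : cpRankLE t r) : (Mt t).det = 0 := by
  obtain ⟨w, rfl⟩ := h
  set U : Matrix (Fin N → Fin 2) (Fin r) ℂ :=
    Matrix.of fun a j => ∏ s : Fin N, w j ⟨s.1, by have := s.2; omega⟩ (a s) with hU
  set V : Matrix (Fin r) (Fin N → Fin 2) ℂ :=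
    Matrix.of fun j b => ∏ s : Fin N, w j ⟨N + s.1, by have := s.2; omega⟩ (b s) with hV
  have hMt : Mt (fun x => ∑ j : Fin r, ∏ v : Fin (2 * N), w j v (x v)) = U * V := by
    funext a b
    show (∑ j : Fin r, ∏ v : Fin (2 * N), w j v (glue a b v)) = (U * V) a b
    rw [Matrix.mul_apply]
    apply Finset.sum_congr rfl
    intro j _
    rw [prodSplit]
    congr 1
    · exact Finset.prod_congr rfl fun s _ => by rw [glue_left]
    · exact Finset.prod_congr rfl fun s _ => by rw [glue_right]
  by_contra hdet
  have hunit : IsUnit (Mt fun x => ∑ j : Fin r, ∏ v : Fin (2 * N), w j v (x v)) :=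
    (Matrix.isUnit_iff_isUnit_det _).mpr (isUnit_iff_ne_zero.mpr hdet)
  have hrank := Matrix.rank_of_isUnit _ hunit
  have hle : (Mt fun x => ∑ j : Fin r, ∏ v : Fin (2 * N), w j v (x v)).rank ≤ r := by
    rw [hMt]
    exact le_trans (Matrix.rank_mul_le_left U V)
      (le_trans (Matrix.rank_le_card_width U) (by simp))
  rw [hrank] at hle
  have hcard : Fintype.card (Fin N → Fin 2) = 2 ^ N := by simp
  rw [hcard] at hle
  exact absurd (lt_of_lt_of_le hr hle) (lt_irrefl r)

/-- For every `r < 2^N`, the tensor `T1 N` does not lie in the closure (for the Euclidean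
topology on the finite-dimensional complex vector space `(ℂ²)^{⊗2N}`) of the set of tensors of
rank at most `r`; and it does lie in the closure of the tensors of rank at most `2^N`.
Consequently its border rank equals `2^N`. -/
theorem stmt2 (N : ℕ) (hN : 1 ≤ N) :
    (∀ r : ℕ, r < 2 ^ N → T1 N ∉ closure {t : (Fin (2 * N) → Fin 2) → ℂ | cpRankLE t r}) ∧
      T1 N ∈ closure {t : (Fin (2 * N) → Fin 2) → ℂ | cpRankLE t (2 ^ N)} := by
  constructor
  · intro r hr hmem
    have hcont : Continuous fun t : (Fin (2 * N) → Fin 2) → ℂ => (Mt t).det := by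
      apply Continuous.matrix_det
      exact continuous_pi fun a => continuous_pi fun b => continuous_apply (glue a b)
    have hclosed : IsClosed {t : (Fin (2 * N) → Fin 2) → ℂ | (Mt t).det = 0} :=
      isClosed_eq hcont continuous_const
    have hsub : {t : (Fin (2 * N) → Fin 2) → ℂ | cpRankLE t r} ⊆
        {t : (Fin (2 * N) → Fin 2) → ℂ | (Mt t).det = 0} :=
      fun t ht => det_zero_of_cpRank hr ht
    have := closure_minimal hsub hclosed hmem
    rw [Set.mem_setOf_eq, Mt_T1, Matrix.det_one] at this
    exact one_ne_zero this
  · apply subset_closure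
    show cpRankLE (T1 N) (2 ^ N)
    have hcard : Fintype.card (Fin N → Fin 2) = 2 ^ N := by simp
    let e : (Fin N → Fin 2) ≃ Fin (2 ^ N) := Fintype.equivFinOfCardEq hcard
    refine ⟨fun j v c =>
      if h : v.1 < N then (if c = e.symm j ⟨v.1, h⟩ then 1 else 0)
      else (if c = e.symm j ⟨v.1 - N, by have := v.2; omega⟩ then 1 else 0), ?_⟩
    funext x
    rw [T1]
    rw [← Equiv.sum_comp e]
    apply Finset.sum_congr rfl
    intro i _
    rw [prodSplit]
    congr 1
    · apply Finset.prod_congr rfl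
      intro s _
      simp only [dif_pos s.2, Equiv.symm_apply_apply]
    · apply Finset.prod_congr rfl
      intro s _
      have h : ¬ (N + s.1 < N) := by omega
      simp only [dif_neg h, Equiv.symm_apply_apply]
      congr 2
      ext
      simp
end

section
/- Let s ≥ 1, N ≥ 1, and let W = ℂ^s ⊗ ℂ^s with basis x^a_b = e_a ⊗ e_b (a, b ∈ {1,…,s}). Let Γ be the set of tuples of indices (i_v, j_v, k_v, l_v, m_v)_{v} ∈ {1,…,s}^{10N}, where v ranges over the 2N grid vertices 1,…,N (top row) and 1′,…,N′ (bottom row), satisfying the contraction equations: j_p = i_{p′} and k_p = j_{p′} for all p = 1,…,N; k_p = l_{p+1} and l_p = m_{p+1} for all p = 1,…,N−1; and k_{p′} = l_{(p+1)′} and l_{p′} = m_{(p+1)′} for all p = 1,…,N−1. Define the tensor t = Σ_{Γ} (⊗_{p=1}^{N} x^{i_p}_{j_p}) ⊗ (x^{l_1}_{m_1} ⊗ x^{l_{1′}}_{m_{1′}}) ⊗ (x^{k_N}_{l_N} ⊗ x^{k_{N′}}_{l_{N′}}) ⊗ (⊗_{p=1}^{N} x^{j_{p′}}_{k_{p′}})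 ⊗ (⊗_{v} x^{m_v}_{i_v}) ∈ W^{⊗N} ⊗ W^{⊗2} ⊗ W^{⊗2} ⊗ W^{⊗N} ⊗ W^{⊗2N}, where the last group of 2N factors is ordered by the vertices 1, 1′, 2, 2′, …, N, N′. Then the S-flattening of t, where S consists of the first 2N + 4 tensor factors, is a surjective linear map onto W^{⊗2N}; in particular this flattening has full rank (s²)^{2N}. (This tensor t is the contraction, along all entanglement edges of the 2×N open grid graph with dangling edges, of a copy at each vertex of the iterated-matrix-multiplication-style tensor T = Σ_{i,j,k,l,m ∈ {1,…,s}} a^i_j ⊗ b^m_i ⊗ c^k_l ⊗ d^j_k ⊗ e^l_m, and the displayed flattening is its edge/vertex flattening from the external boundary edges to the physical edges.) -/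
open scoped BigOperators

/-- The edge/vertex flattening of the tensor network state on the open `2 × N` grid obtained by
placing the tensor `T = Σ_{i,j,k,l,m ∈ [s]} a^i_j ⊗ b^m_i ⊗ c^k_l ⊗ d^j_k ⊗ e^l_m` at every
vertex, written as a matrix in the standard basis `x^a_b = e_a ⊗ e_b` of `W = ℂ^s ⊗ ℂ^s`.

Vertices are pairs `(p, r) : Fin N × Fin 2`, with `r = 0` the top row (vertex `p`) and `r = 1`
the bottom row (vertex `p′`).  The columns of the matrix are indexed by the multi-indices of the
first `2N + 4` tensor factors of
`t ∈ W^{⊗N} ⊗ W^{⊗2} ⊗ W^{⊗2} ⊗ W^{⊗N} ⊗ W^{⊗2N}`,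
namely the upper external edges `x^{i_p}_{j_p}` (`p = 1,…,N`), the left external edges
`x^{l_1}_{m_1} ⊗ x^{l_{1′}}_{m_{1′}}`, the right external edges
`x^{k_N}_{l_N} ⊗ x^{k_{N′}}_{l_{N′}}` and the lower external edges `x^{j_{p′}}_{k_{p′}}`; the
rows are indexed by the multi-indices of the remaining `2N` (physical) factors `x^{m_v}_{i_v}`.
The entry at a given pair of multi-indices is the corresponding coordinate of `t`, i.e. the sum
over all index tuples `(i_v, j_v, k_v, l_v, m_v)_v` in `Γ` (those satisfying the contraction
equations of the grid) of the indicator that the resulting basis tensor matches the given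
multi-indices.  Thus `(M4 s N hN).mulVecLin` is the edge/vertex flattening
`(W^{⊗(2N+4)})^* → W^{⊗2N}` in coordinates. -/
noncomputable def M4 (s N : ℕ) (hN : 1 ≤ N) :
    Matrix ((Fin N × Fin 2) → Fin s × Fin s)
      ((Fin N → Fin s × Fin s) × (Fin 2 → Fin s × Fin s) × (Fin 2 → Fin s × Fin s) ×
        (Fin N → Fin s × Fin s)) ℂ :=
  Matrix.of fun B x =>
    ∑ i : Fin N × Fin 2 → Fin s, ∑ j : Fin N × Fin 2 → Fin s, ∑ k : Fin N × Fin 2 → Fin s,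
      ∑ l : Fin N × Fin 2 → Fin s, ∑ m : Fin N × Fin 2 → Fin s,
        if ((∀ p : Fin N, j (p, 0) = i (p, 1) ∧ k (p, 0) = j (p, 1)) ∧
            (∀ p : Fin N, ∀ h : (p : ℕ) + 1 < N, ∀ r : Fin 2,
              k (p, r) = l (⟨(p : ℕ) + 1, h⟩, r) ∧ l (p, r) = m (⟨(p : ℕ) + 1, h⟩, r)) ∧
            (∀ p : Fin N, x.1 p = (i (p, 0), j (p, 0))) ∧
            (∀ r : Fin 2, x.2.1 r = (l (⟨0, by omega⟩, r), m (⟨0, by omega⟩, r))) ∧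
            (∀ r : Fin 2, x.2.2.1 r = (k (⟨N - 1, by omega⟩, r), l (⟨N - 1, by omega⟩, r))) ∧
            (∀ p : Fin N, x.2.2.2 p = (j (p, 1), k (p, 1))) ∧
            (∀ v : Fin N × Fin 2, B v = (m v, i v)))
        then (1 : ℂ) else 0

namespace M4aux

variable {s N : ℕ}

def I0 (B₀ : (Fin N × Fin 2) → Fin s × Fin s) : Fin N × Fin 2 → Fin s := fun v => (B₀ v).2
def Mm0 (B₀ : (Fin N × Fin 2) → Fin s × Fin s) : Fin N × Fin 2 → Fin s := fun v => (B₀ v).1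
def L0 (B₀ : (Fin N × Fin 2) → Fin s × Fin s) : Fin N × Fin 2 → Fin s := fun v =>
  if h : (v.1 : ℕ) + 1 < N then Mm0 B₀ (⟨(v.1 : ℕ) + 1, h⟩, v.2) else (B₀ v).1
def K0 (B₀ : (Fin N × Fin 2) → Fin s × Fin s) : Fin N × Fin 2 → Fin s := fun v =>
  if h : (v.1 : ℕ) + 1 < N then L0 B₀ (⟨(v.1 : ℕ) + 1, h⟩, v.2) else (B₀ v).1
def J0 (B₀ : (Fin N × Fin 2) → Fin s × Fin s) : Fin N × Fin 2 → Fin s := fun v =>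
  if v.2 = 0 then I0 B₀ (v.1, 1) else K0 B₀ (v.1, 0)

def col (hN : 1 ≤ N) (B₀ : (Fin N × Fin 2) → Fin s × Fin s) :
    (Fin N → Fin s × Fin s) × (Fin 2 → Fin s × Fin s) × (Fin 2 → Fin s × Fin s) ×
      (Fin N → Fin s × Fin s) :=
  (fun p => (I0 B₀ (p, 0), J0 B₀ (p, 0)),
   fun r => (L0 B₀ (⟨0, by omega⟩, r), Mm0 B₀ (⟨0, by omega⟩, r)),
   fun r => (K0 B₀ (⟨N - 1, by omega⟩, r), L0 B₀ (⟨N - 1, by omega⟩, r)),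
   fun p => (J0 B₀ (p, 1), K0 B₀ (p, 1)))

theorem key (hN : 1 ≤ N) (B B₀ : (Fin N × Fin 2) → Fin s × Fin s) :
    M4 s N hN B (col hN B₀) = if B = B₀ then 1 else 0 := by
  have hiff : ∀ i j k l m : Fin N × Fin 2 → Fin s,
      ((∀ p : Fin N, j (p, 0) = i (p, 1) ∧ k (p, 0) = j (p, 1)) ∧
        (∀ p : Fin N, ∀ h : (p : ℕ) + 1 < N, ∀ r : Fin 2,
          k (p, r) = l (⟨(p : ℕ) + 1, h⟩, r) ∧ l (p, r) = m (⟨(p : ℕ) + 1, h⟩, r)) ∧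
        (∀ p : Fin N, (col hN B₀).1 p = (i (p, 0), j (p, 0))) ∧
        (∀ r : Fin 2, (col hN B₀).2.1 r = (l (⟨0, by omega⟩, r), m (⟨0, by omega⟩, r))) ∧
        (∀ r : Fin 2, (col hN B₀).2.2.1 r =
          (k (⟨N - 1, by omega⟩, r), l (⟨N - 1, by omega⟩, r))) ∧
        (∀ p : Fin N, (col hN B₀).2.2.2 p = (j (p, 1), k (p, 1))) ∧
        (∀ v : Fin N × Fin 2, B v = (m v, i v))) ↔
      (i = I0 B₀ ∧ j = J0 B₀ ∧ k = K0 B₀ ∧ l = L0 B₀ ∧ m = Mm0 B₀ ∧ B = B₀) := by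
    intro i j k l m
    constructor
    · rintro ⟨h1, h2, h3, h4, h5, h6, h7⟩
      -- top row gives i(p,0), j(p,0)
      have hi0 : ∀ p : Fin N, i (p, 0) = I0 B₀ (p, 0) := fun p =>
        ((Prod.mk.injEq _ _ _ _).mp (h3 p)).1.symm
      have hj0 : ∀ p : Fin N, j (p, 0) = J0 B₀ (p, 0) := fun p =>
        ((Prod.mk.injEq _ _ _ _).mp (h3 p)).2.symm
      have hj1 : ∀ p : Fin N, j (p, 1) = J0 B₀ (p, 1) := fun p =>
        ((Prod.mk.injEq _ _ _ _).mp (h6 p)).1.symm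
      have hk1 : ∀ p : Fin N, k (p, 1) = K0 B₀ (p, 1) := fun p =>
        ((Prod.mk.injEq _ _ _ _).mp (h6 p)).2.symm
      have hi1 : ∀ p : Fin N, i (p, 1) = I0 B₀ (p, 1) := by
        intro p
        have := (h1 p).1
        rw [hj0 p] at this
        simpa [J0] using this.symm
      have hk0 : ∀ p : Fin N, k (p, 0) = K0 B₀ (p, 0) := by
        intro p
        have := (h1 p).2
        rw [hj1 p] at this
        simpa [J0] using this
      have hk : k = K0 B₀ := by
        funext v
        obtain ⟨p, r⟩ := v
        fin_cases r
        · exact hk0 p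
        · exact hk1 p
      have hi : i = I0 B₀ := by
        funext v
        obtain ⟨p, r⟩ := v
        fin_cases r
        · exact hi0 p
        · exact hi1 p
      have hj : j = J0 B₀ := by
        funext v
        obtain ⟨p, r⟩ := v
        fin_cases r
        · exact hj0 p
        · exact hj1 p
      have hl : l = L0 B₀ := by
        funext v
        obtain ⟨⟨q, hq⟩, r⟩ := v
        rcases Nat.eq_zero_or_pos q with h0 | h0
        · subst h0
          exact ((Prod.mk.injEq _ _ _ _).mp (h4 r)).1.symm
        · obtain ⟨q', rfl⟩ : ∃ q', q = q' + 1 := ⟨q - 1, by omega⟩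
          have h2' := (h2 ⟨q', by omega⟩ hq r).1
          rw [← h2', hk]
          simp only [K0]
          exact dif_pos hq
      have hm : m = Mm0 B₀ := by
        funext v
        obtain ⟨⟨q, hq⟩, r⟩ := v
        rcases Nat.eq_zero_or_pos q with h0 | h0
        · subst h0
          exact ((Prod.mk.injEq _ _ _ _).mp (h4 r)).2.symm
        · obtain ⟨q', rfl⟩ : ∃ q', q = q' + 1 := ⟨q - 1, by omega⟩
          have h2' := (h2 ⟨q', by omega⟩ hq r).2
          rw [← h2', hl]
          simp only [L0]
          exact dif_pos hq
      refine ⟨hi, hj, hk, hl, hm, ?_⟩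
      funext v
      rw [h7 v, hm, hi]
      simp [Mm0, I0]
    · rintro ⟨hi, hj, hk, hl, hm, hB⟩
      subst hi hj hk hl hm hB
      refine ⟨?_, ?_, ?_, ?_, ?_, ?_, ?_⟩
      · intro p
        constructor
        · simp [J0]
        · simp [J0]
      · intro p h r
        constructor
        · simp only [K0, dif_pos h]
        · simp only [L0, dif_pos h, Mm0]
      · intro p; rfl
      · intro r; rfl
      · intro r; rfl
      · intro p; rfl
      · intro v; simp [Mm0, I0]
  simp only [M4, Matrix.of_apply]
  simp only [hiff]
  simp only [ite_and, Finset.sum_ite_irrel, Finset.sum_const_zero, Finset.sum_ite_eq',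
    Finset.mem_univ, if_true]

end M4aux

/-- The edge/vertex flattening of the `2 × N` open-grid tensor network state built from the
iterated-matrix-multiplication-style tensor `T = Σ a^i_j ⊗ b^m_i ⊗ c^k_l ⊗ d^j_k ⊗ e^l_m` is a
surjective linear map onto `W^{⊗2N}` (where `W = ℂ^s ⊗ ℂ^s`); in particular it has full rank
`(s²)^{2N}`. -/
theorem stmt4 (s N : ℕ) (hs : 1 ≤ s) (hN : 1 ≤ N) :
    Function.Surjective (M4 s N hN).mulVecLin ∧ (M4 s N hN).rank = (s ^ 2) ^ (2 * N) := by
  have hsurj : Function.Surjective (M4 s N hN).mulVecLin := by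
    intro y
    refine ⟨fun x => ∑ B₀, if x = M4aux.col hN B₀ then y B₀ else 0, ?_⟩
    funext B
    simp only [Matrix.mulVecLin_apply, Matrix.mulVec, dotProduct, Finset.mul_sum]
    rw [Finset.sum_comm]
    have : ∀ B₀ : (Fin N × Fin 2) → Fin s × Fin s,
        (∑ x, M4 s N hN B x * if x = M4aux.col hN B₀ then y B₀ else 0)
          = (if B = B₀ then 1 else 0) * y B₀ := by
      intro B₀
      rw [Finset.sum_eq_single (M4aux.col hN B₀)]
      · rw [if_pos rfl, M4aux.key]
      · intro x _ hx; rw [if_neg hx, mul_zero]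
      · intro h; exact absurd (Finset.mem_univ _) h
    simp only [this]
    simp [Finset.sum_ite_eq]
  refine ⟨hsurj, ?_⟩
  have hrange : LinearMap.range (M4 s N hN).mulVecLin = ⊤ :=
    LinearMap.range_eq_top.mpr hsurj
  rw [Matrix.rank, hrange, finrank_top]
  rw [Module.finrank_pi]
  simp [Fintype.card_prod, Fintype.card_fin]
  ring
end

section
/- Let d ≥ k ≥ 1 and N ≥ 1, let e₁,…,e_d be the standard basis of ℂ^d, let ē₁,…,ē_k be the standard basis of ℂ^k, and set f = e₁. Define the tensor t = Σ_{α : {1,…,N} → {1,…,k}} Σ_{β : {1,…,N} → {1,…,k}} f ⊗ f ⊗ f ⊗ f ⊗ (e_{α(1)} ⊗ ⋯ ⊗ e_{α(N)}) ⊗ (e_{β(1)} ⊗ ⋯ ⊗ e_{β(N)}) ⊗ (ē_{α(1)} ⊗ ⋯ ⊗ ē_{α(N)} ⊗ ē_{β(1)} ⊗ ⋯ ⊗ ē_{β(N)}) ∈ (ℂ^d)^{⊗(2N+4)} ⊗ (ℂ^k)^{⊗2N}. Then the S-flattening of t, where S consists of the first 2N + 4 tensor factors (the ℂ^d factors), is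 a surjective linear map from ((ℂ^d)^{⊗(2N+4)})^* onto (ℂ^k)^{⊗2N}; in particular this flattening has full rank k^{2N}. -/
open scoped BigOperators

/-- The `S`-flattening (the `S` of the statement: the first `2N + 4` tensor factors, which are
the `ℂ^d` factors) of the tensor
`t = Σ_{α,β : [N] → [k]} f ⊗ f ⊗ f ⊗ f ⊗ (e_{α(1)} ⊗ ⋯ ⊗ e_{α(N)}) ⊗ (e_{β(1)} ⊗ ⋯ ⊗ e_{β(N)})
⊗ (ē_{α(1)} ⊗ ⋯ ⊗ ē_{α(N)} ⊗ ē_{β(1)} ⊗ ⋯ ⊗ ē_{β(N)}) ∈ (ℂ^d)^{⊗(2N+4)} ⊗ (ℂ^k)^{⊗2N}`,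
where `f = e₁ = e 0` is the first standard basis vector of `ℂ^d`, written as a matrix.

Columns are indexed by the multi-indices of the `2N + 4` `ℂ^d`-factors: the four `f`-factors,
then the `e_α`-factors, then the `e_β`-factors.  Rows are indexed by the multi-indices of the
`2N` `ℂ^k`-factors, split as the `ē_α`-part followed by the `ē_β`-part.  The entry at a given
pair of multi-indices is the corresponding coordinate of `t`.  Thus
`(M5 d k N hk hdk).mulVecLin` is the flattening map `((ℂ^d)^{⊗(2N+4)})^* → (ℂ^k)^{⊗2N}` in
coordinates. -/
noncomputable def M5 (d k N : ℕ) (hk : 1 ≤ k) (hdk : k ≤ d) :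
    Matrix ((Fin N → Fin k) × (Fin N → Fin k))
      ((Fin 4 → Fin d) × (Fin N → Fin d) × (Fin N → Fin d)) ℂ :=
  Matrix.of fun P x =>
    ∑ α : Fin N → Fin k, ∑ β : Fin N → Fin k,
      if ((∀ r : Fin 4, x.1 r = ⟨0, by omega⟩) ∧
          (∀ p : Fin N, x.2.1 p = Fin.castLE hdk (α p)) ∧
          (∀ p : Fin N, x.2.2 p = Fin.castLE hdk (β p)) ∧
          P.1 = α ∧ P.2 = β)
      then (1 : ℂ) else 0

variable {d k N : ℕ}

def colOf (hk : 1 ≤ k) (hdk : k ≤ d) (P : (Fin N → Fin k) × (Fin N → Fin k)) :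
    (Fin 4 → Fin d) × (Fin N → Fin d) × (Fin N → Fin d) :=
  (fun _ => ⟨0, by omega⟩, fun p => Fin.castLE hdk (P.1 p), fun p => Fin.castLE hdk (P.2 p))

lemma colOf_inj (hk : 1 ≤ k) (hdk : k ≤ d) :
    Function.Injective (colOf (N := N) hk hdk) := by
  intro P Q h
  obtain ⟨h1, h2⟩ := Prod.mk.injEq _ _ _ _ ▸ h
  rw [Prod.mk.injEq] at h2
  ext p
  · have := congrFun h2.1 p
    simpa [Fin.castLE] using congrArg Fin.val this
  · have := congrFun h2.2 p
    simpa [Fin.castLE] using congrArg Fin.val this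

lemma M5_apply (hk : 1 ≤ k) (hdk : k ≤ d) (P) (x) :
    M5 d k N hk hdk P x = if x = colOf hk hdk P then 1 else 0 := by
  unfold M5 colOf
  rw [Matrix.of_apply]
  rw [Finset.sum_eq_single P.1 ?h1 ?h2, Finset.sum_eq_single P.2 ?h3 ?h4]
  case h1 =>
    intro a _ ha
    apply Finset.sum_eq_zero
    intro b _
    simp only [ite_eq_right_iff, one_ne_zero]
    rintro ⟨-, -, -, h, -⟩
    exact absurd h.symm ha
  case h2 => simp
  case h3 =>
    intro b _ hb
    simp only [ite_eq_right_iff, one_ne_zero]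
    rintro ⟨-, -, -, -, h⟩
    exact absurd h.symm hb
  case h4 => simp
  congr 1
  rw [eq_iff_iff]
  constructor
  · rintro ⟨ha, hb, hc, -, -⟩
    refine Prod.ext ?_ (Prod.ext ?_ ?_) <;> funext p <;> simp_all
  · rintro rfl
    exact ⟨fun r => rfl, fun p => rfl, fun p => rfl, rfl, rfl⟩

/-- The `S`-flattening of the tensor `t` above, where `S` consists of the first `2N + 4`
(`ℂ^d`) tensor factors, is a surjective linear map from `((ℂ^d)^{⊗(2N+4)})^*` onto
`(ℂ^k)^{⊗2N}`; in particular it has full rank `k^{2N}`. -/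
theorem stmt5 (d k N : ℕ) (hk : 1 ≤ k) (hdk : k ≤ d) (hN : 1 ≤ N) :
    Function.Surjective (M5 d k N hk hdk).mulVecLin ∧
      (M5 d k N hk hdk).rank = k ^ (2 * N) := by
  have hsurj : Function.Surjective (M5 d k N hk hdk).mulVecLin := by
    intro w
    refine ⟨fun x => ∑ Q, if x = colOf hk hdk Q then w Q else 0, ?_⟩
    funext P
    rw [Matrix.mulVecLin_apply, Matrix.mulVec]
    show (∑ x, M5 d k N hk hdk P x * _) = w P
    have : ∀ x, M5 d k N hk hdk P x * (∑ Q, if x = colOf hk hdk Q then w Q else 0)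
        = if x = colOf hk hdk P then (∑ Q, if x = colOf hk hdk Q then w Q else 0) else 0 := by
      intro x; rw [M5_apply]; split <;> simp
    simp_rw [this]
    rw [Finset.sum_ite_eq' Finset.univ (colOf hk hdk P)]
    simp only [Finset.mem_univ, if_true]
    rw [Finset.sum_eq_single P]
    · simp
    · intro b _ hb
      have : colOf hk hdk P ≠ colOf hk hdk b := fun h => hb (colOf_inj hk hdk h).symm
      simp [this]
    · simp
  refine ⟨hsurj, ?_⟩
  rw [Matrix.rank, LinearMap.range_eq_top.mpr hsurj, finrank_top]
  simp [Module.finrank_pi, two_mul, pow_add]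
end
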